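/- arXiv:2207.13952 — 2 statements merged into one kernel-verified Lean document; each statement's English description precedes it below -/
import Mathlib

section
/- Mscm is a category: the data consisting of objects given by pairs of finite types (X_in, X_out), hom-sets given by pairs of matrices (M_in : Matrix X_in (Y_in ⊕ X_out) K, M_out : Matrix Y_out X_out K), identity morphisms given by (fromBlocks 1 0, 1), and composition given by the matrix composition formula, satisfies all the axioms of a category (left identity, right identity, and associativity), and hence admits a Category instance in the sense of category theory. -/
/-!
Splitting an input matrix column-wise as `N_in = [A | B]` (its `Y_in` and `X_out` columns), the
composite of `(N_in, N_out)` with `([C | D], M_out)` has input matrix `[A C | A D N_out + B]`: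
the auxiliary block matrices just route the `Y_out` columns of `M_in` through `N_out`. In this
form both unit laws and associativity are identities of matrix multiplication over a semiring.
-/

/-- The auxiliary matrix `N'_out` of the composition formula: the block matrix of type
`Matrix ((Zin ⊕ Yout) ⊕ Xout) (Zin ⊕ Xout) K` whose `(Zin, Zin)` block is the identity,
whose `(Yout, Xout)` block is `Nout`, whose `(Xout, Xout)` block is the identity, and
whose remaining blocks are zero. -/
def mscmNout' {σ : Type} {Zin Yout Xout : Type} [DecidableEq Zin] [DecidableEq Xout]
    (Nout : Matrix Yout Xout (Language σ)) :
    Matrix ((Zin ⊕ Yout) ⊕ Xout) (Zin ⊕ Xout) (Language σ) :=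
  Matrix.of fun r c =>
    match r, c with
    | Sum.inl (Sum.inl z), Sum.inl z' => (1 : Matrix Zin Zin (Language σ)) z z'
    | Sum.inl (Sum.inr y), Sum.inr x => Nout y x
    | Sum.inr x, Sum.inr x' => (1 : Matrix Xout Xout (Language σ)) x x'
    | _, _ => 0

/-- The input-matrix component of the composite `m ∘ n` of Mscm-morphisms
`n = (Nin, Nout) : X → Y` and `m = (Min, Mout) : Y → Z`, namely
`O_in = N_in * M'_in * N'_out` where `M'_in = fromBlocks Min 0 0 1`. -/
def mscmCompIn {σ : Type} {Xin Xout Yin Yout Zin : Type}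
    [Fintype Yin] [Fintype Yout] [Fintype Xout] [Fintype Zin]
    [DecidableEq Zin] [DecidableEq Xout]
    (Nin : Matrix Xin (Yin ⊕ Xout) (Language σ))
    (Nout : Matrix Yout Xout (Language σ))
    (Min : Matrix Yin (Zin ⊕ Yout) (Language σ)) :
    Matrix Xin (Zin ⊕ Xout) (Language σ) :=
  Nin * (Matrix.fromBlocks Min 0 0 1 :
      Matrix (Yin ⊕ Xout) ((Zin ⊕ Yout) ⊕ Xout) (Language σ)) * mscmNout' (Zin := Zin) Nout


open CategoryTheory

/-- An object of `Mscm`: a pair of finite types, the input and output ports of a box. -/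
structure MscmObj (σ : Type) : Type 1 where
  inT : Type
  outT : Type
  [finIn : Fintype inT]
  [finOut : Fintype outT]
  [decIn : DecidableEq inT]
  [decOut : DecidableEq outT]

attribute [instance] MscmObj.finIn MscmObj.finOut MscmObj.decIn MscmObj.decOut

/-- The category structure of `Mscm`: a morphism `X ⟶ Y` is a pair of matrices
`(Min : Matrix X.inT (Y.inT ⊕ X.outT) K, Mout : Matrix Y.outT X.outT K)` over the
language semiring `K = Language σ`; the identity is `(fromColumns 1 0, 1)`; and
composition is given by the matrix composition formula. -/
instance mscmCategoryStruct (σ : Type) : CategoryStruct (MscmObj σ) where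
  Hom X Y := Matrix X.inT (Y.inT ⊕ X.outT) (Language σ) × Matrix Y.outT X.outT (Language σ)
  id X := (Matrix.fromCols 1 0, 1)
  comp {X Y Z} n m := (mscmCompIn n.1 n.2 m.1, m.2 * n.2)

open Matrix

section Composition

variable {σ : Type} {Xin Xout Yin Yout Zin : Type} [DecidableEq Zin] [DecidableEq Xout]

lemma mscmNout'_eq_fromBlocks (Nout : Matrix Yout Xout (Language σ)) :
    mscmNout' (Zin := Zin) Nout = fromBlocks (fromRows 1 0) (fromRows 0 Nout) 0 1 := by
  ext (⟨z | y⟩ | x) (z' | x') <;> simp [mscmNout', fromBlocks]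

lemma mscmCompIn_fromCols [Fintype Yin] [Fintype Yout] [Fintype Xout] [Fintype Zin]
    (A : Matrix Xin Yin (Language σ)) (B : Matrix Xin Xout (Language σ))
    (Nout : Matrix Yout Xout (Language σ))
    (C : Matrix Yin Zin (Language σ)) (D : Matrix Yin Yout (Language σ)) :
    mscmCompIn (fromCols A B) Nout (fromCols C D) = fromCols (A * C) (A * D * Nout + B) := by
  rw [mscmCompIn, mscmNout'_eq_fromBlocks, fromCols_mul_fromBlocks]
  simp only [Matrix.mul_zero, Matrix.mul_one, add_zero, mul_fromCols]
  rw [fromCols_mul_fromBlocks]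
  simp only [Matrix.mul_zero, Matrix.mul_one, add_zero, zero_add, fromCols_mul_fromRows]

end Composition

section Laws

variable {σ : Type}

lemma mscm_id_comp {X Y : MscmObj σ} (f : X ⟶ Y) : 𝟙 X ≫ f = f := by
  change (mscmCompIn (fromCols 1 0) 1 f.1, f.2 * 1) = f
  rw [← fromCols_toCols f.1, mscmCompIn_fromCols]
  simp

lemma mscm_comp_id {X Y : MscmObj σ} (f : X ⟶ Y) : f ≫ 𝟙 Y = f := by
  change (mscmCompIn f.1 f.2 (fromCols 1 0), 1 * f.2) = f
  rw [← fromCols_toCols f.1, mscmCompIn_fromCols]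
  simp

lemma mscm_assoc {W X Y Z : MscmObj σ} (f : W ⟶ X) (g : X ⟶ Y) (h : Y ⟶ Z) :
    (f ≫ g) ≫ h = f ≫ (g ≫ h) := by
  change (mscmCompIn (mscmCompIn f.1 f.2 g.1) (g.2 * f.2) h.1, h.2 * (g.2 * f.2)) =
    (mscmCompIn f.1 f.2 (mscmCompIn g.1 g.2 h.1), h.2 * g.2 * f.2)
  rw [← fromCols_toCols f.1, ← fromCols_toCols g.1, ← fromCols_toCols h.1]
  simp only [mscmCompIn_fromCols, Matrix.mul_add, Matrix.add_mul, Matrix.mul_assoc, add_assoc]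

/-- Not an instance, so that `⟶`, `𝟙`, `≫` on `MscmObj σ` keep elaborating through
`mscmCategoryStruct`. -/
abbrev mscmCategory : Category (MscmObj σ) where
  id_comp := mscm_id_comp
  comp_id := mscm_comp_id
  assoc := mscm_assoc

end Laws

/-- **Mscm is a category**: the objects (pairs of finite types), hom-sets (pairs of
matrices over the language semiring), identities `(fromColumns 1 0, 1)` and the matrix
composition formula satisfy the left identity, right identity and associativity laws,
and hence admit a `Category` instance. -/
theorem mscm_is_category (σ : Type) :
    (∀ (X Y : MscmObj σ) (f : X ⟶ Y), 𝟙 X ≫ f = f) ∧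
    (∀ (X Y : MscmObj σ) (f : X ⟶ Y), f ≫ 𝟙 Y = f) ∧
    (∀ (W X Y Z : MscmObj σ) (f : W ⟶ X) (g : X ⟶ Y) (h : Y ⟶ Z),
        (f ≫ g) ≫ h = f ≫ (g ≫ h)) ∧
    Nonempty (Category (MscmObj σ)) :=
  ⟨fun _ _ => mscm_id_comp, fun _ _ => mscm_comp_id,
    fun _ _ _ _ => mscm_assoc,
    -- the hom universe of `Category` is left free here, so the homs of Mscm are lifted into it
    ⟨@ULiftHom.category (MscmObj σ) mscmCategory⟩⟩
end

section
/- The tensor product of Mscm-morphisms preserves composition (functoriality of ⊗; the interchange law): for morphisms θ1 : X1 → Y1, θ2 : X2 → Y2, α1 : Y1 → Z1, α2 : Y2 → Z2, one has (α1 ∘ θ1) ⊗ (α2 ∘ θ2) = (α1 ⊗ α2) ∘ (θ1 ⊗ θ2), where ∘ is the matrix composition formula and ⊗ is block-diagonal stacking of the component matrices with reindexing along the canonical sum-type bijections; i.e., both component matrices of the two sides coincide. -/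
/-- The in-component of the tensor product of two Mscm-morphisms: the block-diagonal
matrix with blocks `M1in` and `M2in`, reindexed along the canonical bijection
`(Y1in ⊕ X1out) ⊕ (Y2in ⊕ X2out) ≃ (Y1in ⊕ Y2in) ⊕ (X1out ⊕ X2out)`. -/
def mscmTensorIn {σ : Type} {X1in X1out Y1in X2in X2out Y2in : Type}
    (M1in : Matrix X1in (Y1in ⊕ X1out) (Language σ))
    (M2in : Matrix X2in (Y2in ⊕ X2out) (Language σ)) :
    Matrix (X1in ⊕ X2in) ((Y1in ⊕ Y2in) ⊕ (X1out ⊕ X2out)) (Language σ) :=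
  (Matrix.fromBlocks M1in 0 0 M2in).submatrix id
    (Equiv.sumSumSumComm Y1in X1out Y2in X2out).symm

/-!
Split an in-matrix into its column blocks, `N = [N₁ | N₂]` with `N₁` on the `Yin` columns and
`N₂` on the `Xout` columns. Then the composite has the closed form
`mscmCompIn [N₁ | N₂] Nout [M₁ | M₂] = [N₁ M₁ | N₁ M₂ Nout + N₂]`, and the tensor product of
in-matrices is `[A₁ | B₁] ⊗ [A₂ | B₂] = [diag(A₁, A₂) | diag(B₁, B₂)]`. Both sides of the
interchange law therefore become sums and products of block-diagonal matrices with the same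
blocks, and block-diagonal matrices add and multiply blockwise.
-/

open Matrix

section

variable {σ : Type}

lemma mscmNout'_eq_fromRows {Zin Yout Xout : Type} [DecidableEq Zin] [DecidableEq Xout]
    (Nout : Matrix Yout Xout (Language σ)) :
    mscmNout' (Zin := Zin) Nout = fromRows (fromBlocks 1 0 0 Nout) (fromCols 0 1) := by
  ext ((z | y) | x) (z' | x') <;> rfl

lemma mscmCompIn_eq_fromCols {Xin Xout Yin Yout Zin : Type}
    [Fintype Yin] [Fintype Yout] [Fintype Xout] [Fintype Zin] [DecidableEq Zin] [DecidableEq Xout]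
    (Nin : Matrix Xin (Yin ⊕ Xout) (Language σ)) (Nout : Matrix Yout Xout (Language σ))
    (Min : Matrix Yin (Zin ⊕ Yout) (Language σ)) :
    mscmCompIn Nin Nout Min =
      fromCols (Nin.toCols₁ * Min.toCols₁) (Nin.toCols₁ * Min.toCols₂ * Nout + Nin.toCols₂) := by
  have hkernel :
      fromBlocks Min 0 0 (1 : Matrix Xout Xout (Language σ)) * mscmNout' (Zin := Zin) Nout
        = fromBlocks Min.toCols₁ (Min.toCols₂ * Nout) 0 1 := by
    rw [mscmNout'_eq_fromRows, fromBlocks_mul_fromRows, ← fromCols_toCols Min,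
      fromCols_mul_fromBlocks, ← fromRows_fromCols_eq_fromBlocks]
    simp
  rw [mscmCompIn, Matrix.mul_assoc, hkernel, ← fromCols_toCols Nin, fromCols_mul_fromBlocks]
  simp [Matrix.mul_assoc]

lemma mscmTensorIn_fromCols {X1in X1out Y1in X2in X2out Y2in : Type}
    (A1 : Matrix X1in Y1in (Language σ)) (B1 : Matrix X1in X1out (Language σ))
    (A2 : Matrix X2in Y2in (Language σ)) (B2 : Matrix X2in X2out (Language σ)) :
    mscmTensorIn (fromCols A1 B1) (fromCols A2 B2)
      = fromCols (fromBlocks A1 0 0 A2) (fromBlocks B1 0 0 B2) := by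
  ext (i | i) ((j | j) | (j | j)) <;> rfl

lemma mscmTensorIn_eq_fromCols {X1in X1out Y1in X2in X2out Y2in : Type}
    (M1 : Matrix X1in (Y1in ⊕ X1out) (Language σ)) (M2 : Matrix X2in (Y2in ⊕ X2out) (Language σ)) :
    mscmTensorIn M1 M2 = fromCols (fromBlocks M1.toCols₁ 0 0 M2.toCols₁)
      (fromBlocks M1.toCols₂ 0 0 M2.toCols₂) := by
  rw [← mscmTensorIn_fromCols, fromCols_toCols, fromCols_toCols]

end

theorem mscm_tensor_comp_general {σ : Type}
    {X1in X1out Y1in Y1out Z1in Z1out X2in X2out Y2in Y2out Z2in Z2out : Type}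
    [Fintype X1out] [Fintype Y1in] [Fintype Y1out] [Fintype Z1in]
    [Fintype X2out] [Fintype Y2in] [Fintype Y2out] [Fintype Z2in]
    [DecidableEq X1out] [DecidableEq Z1in] [DecidableEq X2out] [DecidableEq Z2in]
    (T1in : Matrix X1in (Y1in ⊕ X1out) (Language σ)) (T1out : Matrix Y1out X1out (Language σ))
    (T2in : Matrix X2in (Y2in ⊕ X2out) (Language σ)) (T2out : Matrix Y2out X2out (Language σ))
    (A1in : Matrix Y1in (Z1in ⊕ Y1out) (Language σ)) (A1out : Matrix Z1out Y1out (Language σ))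
    (A2in : Matrix Y2in (Z2in ⊕ Y2out) (Language σ)) (A2out : Matrix Z2out Y2out (Language σ)) :
    mscmTensorIn (mscmCompIn T1in T1out A1in) (mscmCompIn T2in T2out A2in)
      = mscmCompIn (mscmTensorIn T1in T2in) (Matrix.fromBlocks T1out 0 0 T2out)
          (mscmTensorIn A1in A2in) ∧
    Matrix.fromBlocks (A1out * T1out) 0 0 (A2out * T2out)
      = Matrix.fromBlocks A1out 0 0 A2out * Matrix.fromBlocks T1out 0 0 T2out := by
  refine ⟨?_, by rw [fromBlocks_multiply]; simp⟩
  rw [mscmCompIn_eq_fromCols, mscmCompIn_eq_fromCols, mscmCompIn_eq_fromCols,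
    mscmTensorIn_fromCols, mscmTensorIn_eq_fromCols T1in, mscmTensorIn_eq_fromCols A1in]
  simp [fromBlocks_multiply, fromBlocks_add]

/-- **Tensor preserves composition (the interchange law)**: for Mscm-morphisms
`θ1 = (T1in, T1out) : X1 → Y1`, `θ2 = (T2in, T2out) : X2 → Y2`,
`α1 = (A1in, A1out) : Y1 → Z1`, `α2 = (A2in, A2out) : Y2 → Z2`, one has
`(α1 ∘ θ1) ⊗ (α2 ∘ θ2) = (α1 ⊗ α2) ∘ (θ1 ⊗ θ2)`, where `∘` is the matrix composition
formula and `⊗` is block-diagonal stacking (with reindexing along the canonical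
sum-type bijections); both component matrices of the two sides coincide. -/
theorem mscm_tensor_comp {σ : Type}
    {X1in X1out Y1in Y1out Z1in Z1out X2in X2out Y2in Y2out Z2in Z2out : Type}
    [Fintype X1in] [Fintype X1out] [Fintype Y1in] [Fintype Y1out] [Fintype Z1in] [Fintype Z1out]
    [Fintype X2in] [Fintype X2out] [Fintype Y2in] [Fintype Y2out] [Fintype Z2in] [Fintype Z2out]
    [DecidableEq X1out] [DecidableEq Z1in] [DecidableEq X2out] [DecidableEq Z2in]
    (T1in : Matrix X1in (Y1in ⊕ X1out) (Language σ)) (T1out : Matrix Y1out X1out (Language σ))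
    (T2in : Matrix X2in (Y2in ⊕ X2out) (Language σ)) (T2out : Matrix Y2out X2out (Language σ))
    (A1in : Matrix Y1in (Z1in ⊕ Y1out) (Language σ)) (A1out : Matrix Z1out Y1out (Language σ))
    (A2in : Matrix Y2in (Z2in ⊕ Y2out) (Language σ)) (A2out : Matrix Z2out Y2out (Language σ)) :
    mscmTensorIn (mscmCompIn T1in T1out A1in) (mscmCompIn T2in T2out A2in)
      = mscmCompIn (mscmTensorIn T1in T2in) (Matrix.fromBlocks T1out 0 0 T2out)
          (mscmTensorIn A1in A2in) ∧
    Matrix.fromBlocks (A1out * T1out) 0 0 (A2out * T2out)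
      = Matrix.fromBlocks A1out 0 0 A2out * Matrix.fromBlocks T1out 0 0 T2out :=
  mscm_tensor_comp_general T1in T1out T2in T2out A1in A1out A2in A2out
end
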